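/- arXiv:1403.4600 — 2 statements merged into one kernel-verified Lean document; each statement's English description precedes it below -/
import Mathlib

section
/- Let M(r,φ) = e^{φX} m(r) e^{φXᵀ} where X is a constant real n×n matrix and m(r) symmetric invertible. Then the equation of motion r ∂_r(r ∂_r M · M⁻¹) + ∂_φ(∂_φ M · M⁻¹) = 0 is equivalent to r ∂_r(r ∂_r m · m⁻¹) + [X, m Xᵀ m⁻¹] = 0. -/
open Matrix Set

attribute [local instance] Matrix.linftyOpNormedAddCommGroup Matrix.linftyOpNormedRing
  Matrix.linftyOpNormedAlgebra

section helpers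
variable {n : ℕ}

/-- The continuous linear map extracting the `(i,j)` entry of a matrix. -/
noncomputable def entryCLM (i j : Fin n) : Matrix (Fin n) (Fin n) ℝ →L[ℝ] ℝ :=
  LinearMap.toContinuousLinearMap
    { toFun := fun A => A i j
      map_add' := fun _ _ => rfl
      map_smul' := fun _ _ => rfl }

lemma hasDerivAt_entry {f : ℝ → Matrix (Fin n) (Fin n) ℝ} {F : Matrix (Fin n) (Fin n) ℝ}
    {x : ℝ} (h : HasDerivAt f F x) (i j : Fin n) :
    HasDerivAt (fun t => f t i j) (F i j) x :=
  (entryCLM i j).hasFDerivAt.comp_hasDerivAt x h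

lemma matrix_mul_deriv {pf qf : ℝ → Matrix (Fin n) (Fin n) ℝ}
    {p' q' : Matrix (Fin n) (Fin n) ℝ} {x : ℝ}
    (hp : ∀ i j, HasDerivAt (fun t => pf t i j) (p' i j) x)
    (hq : ∀ i j, HasDerivAt (fun t => qf t i j) (q' i j) x) (i j : Fin n) :
    HasDerivAt (fun t => (pf t * qf t) i j) ((p' * qf x + pf x * q') i j) x := by
  simp only [Matrix.mul_apply, Matrix.add_apply]
  rw [← Finset.sum_add_distrib]
  exact HasDerivAt.fun_sum fun k _ => (hp i k).mul (hq k j)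

lemma const_mul_mul_const_deriv {C D g' : Matrix (Fin n) (Fin n) ℝ}
    {g : ℝ → Matrix (Fin n) (Fin n) ℝ} {x : ℝ}
    (hg : ∀ i j, HasDerivAt (fun t => g t i j) (g' i j) x) (i j : Fin n) :
    HasDerivAt (fun t => (C * g t * D) i j) ((C * g' * D) i j) x := by
  have hC : ∀ i j, HasDerivAt (fun _ : ℝ => C i j) ((0 : Matrix (Fin n) (Fin n) ℝ) i j) x :=
    fun i j => hasDerivAt_const x (C i j)
  have hD : ∀ i j, HasDerivAt (fun _ : ℝ => D i j) ((0 : Matrix (Fin n) (Fin n) ℝ) i j) x :=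
    fun i j => hasDerivAt_const x (D i j)
  have h1 : ∀ i j, HasDerivAt (fun t => (C * g t) i j) ((C * g') i j) x := by
    intro i j
    simpa using matrix_mul_deriv hC hg i j
  simpa using matrix_mul_deriv h1 hD i j

lemma exp_entry_deriv (X : Matrix (Fin n) (Fin n) ℝ) (φ : ℝ) (i j : Fin n) :
    HasDerivAt (fun ψ : ℝ => NormedSpace.exp (ψ • X) i j)
      ((X * NormedSpace.exp (φ • X)) i j) φ :=
  hasDerivAt_entry (hasDerivAt_exp_smul_const' X φ) i j

lemma exp_entry_deriv' (X : Matrix (Fin n) (Fin n) ℝ) (φ : ℝ) (i j : Fin n) :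
    HasDerivAt (fun ψ : ℝ => NormedSpace.exp (ψ • X) i j)
      ((NormedSpace.exp (φ • X) * X) i j) φ :=
  hasDerivAt_entry (hasDerivAt_exp_smul_const X φ) i j

lemma exp_comm (X : Matrix (Fin n) (Fin n) ℝ) (φ : ℝ) :
    NormedSpace.exp (φ • X) * X = X * NormedSpace.exp (φ • X) :=
  (hasDerivAt_exp_smul_const X φ).unique (hasDerivAt_exp_smul_const' X φ)

lemma exp_neg_comm (X : Matrix (Fin n) (Fin n) ℝ) (φ : ℝ) :
    NormedSpace.exp (-(φ • X)) * X = X * NormedSpace.exp (-(φ • X)) := by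
  rw [← neg_smul]
  exact exp_comm X (-φ)

lemma exp_mul_exp_neg (X : Matrix (Fin n) (Fin n) ℝ) (φ : ℝ) :
    NormedSpace.exp (φ • X) * NormedSpace.exp (-(φ • X)) = 1 := by
  erw [← NormedSpace.exp_add_of_commute (Commute.neg_right (Commute.refl _)), add_neg_cancel,
    NormedSpace.exp_zero]

lemma exp_cancel (X : Matrix (Fin n) (Fin n) ℝ) (φ : ℝ) (Z : Matrix (Fin n) (Fin n) ℝ) :
    NormedSpace.exp (φ • X) * (NormedSpace.exp (-(φ • X)) * Z) = Z := by
  rw [← Matrix.mul_assoc, exp_mul_exp_neg, Matrix.one_mul]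

end helpers

/-- The ansatz M(r,φ) = e^{φX} m(r) e^{φXᵀ}. -/
noncomputable def ansatzM {n : ℕ} (X : Matrix (Fin n) (Fin n) ℝ)
    (m : ℝ → Matrix (Fin n) (Fin n) ℝ) (r φ : ℝ) : Matrix (Fin n) (Fin n) ℝ :=
  NormedSpace.exp (φ • X) * m r * NormedSpace.exp (φ • Xᵀ)

/-- For M(r,φ) = e^{φX} m(r) e^{φXᵀ} with m(r) symmetric and invertible, the field
equation r∂_r(r∂_r M · M⁻¹) + ∂_φ(∂_φ M · M⁻¹) = 0 holds if and only if
r∂_r(r∂_r m · m⁻¹) + [X, m Xᵀ m⁻¹] = 0.  All the needed derivatives are supplied as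
entrywise `HasDerivAt` data. -/
theorem ansatz_equation_of_motion_equiv
    {n : ℕ} (X : Matrix (Fin n) (Fin n) ℝ)
    (m m' : ℝ → Matrix (Fin n) (Fin n) ℝ)
    (hm' : ∀ (i j : Fin n), ∀ r ∈ Ioi (0:ℝ), HasDerivAt (fun s => m s i j) (m' r i j) r)
    (hsym : ∀ r ∈ Ioi (0:ℝ), (m r)ᵀ = m r)
    (hinv : ∀ r ∈ Ioi (0:ℝ), IsUnit (m r))
    -- radial derivative of M and of (r ∂_r M) M⁻¹
    (DrM A' : ℝ → ℝ → Matrix (Fin n) (Fin n) ℝ)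
    (hDrM : ∀ (i j : Fin n) (φ : ℝ), ∀ r ∈ Ioi (0:ℝ),
      HasDerivAt (fun s => ansatzM X m s φ i j) (DrM r φ i j) r)
    (hA' : ∀ (i j : Fin n) (φ : ℝ), ∀ r ∈ Ioi (0:ℝ),
      HasDerivAt (fun s => ((s • DrM s φ) * (ansatzM X m s φ)⁻¹) i j) (A' r φ i j) r)
    -- angular derivative of M and of (∂_φ M) M⁻¹
    (DφM B' : ℝ → ℝ → Matrix (Fin n) (Fin n) ℝ)
    (hDφM : ∀ (i j : Fin n) (φ : ℝ), ∀ r ∈ Ioi (0:ℝ),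
      HasDerivAt (fun ψ => ansatzM X m r ψ i j) (DφM r φ i j) φ)
    (hB' : ∀ (i j : Fin n) (φ : ℝ), ∀ r ∈ Ioi (0:ℝ),
      HasDerivAt (fun ψ => (DφM r ψ * (ansatzM X m r ψ)⁻¹) i j) (B' r φ i j) φ)
    -- radial derivative of (r ∂_r m) m⁻¹
    (G' : ℝ → Matrix (Fin n) (Fin n) ℝ)
    (hG' : ∀ (i j : Fin n), ∀ r ∈ Ioi (0:ℝ),
      HasDerivAt (fun s => ((s • m' s) * (m s)⁻¹) i j) (G' r i j) r) :
    (∀ r ∈ Ioi (0:ℝ), ∀ φ : ℝ, r • A' r φ + B' r φ = 0) ↔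
    (∀ r ∈ Ioi (0:ℝ),
      r • G' r + (X * (m r * Xᵀ * (m r)⁻¹) - (m r * Xᵀ * (m r)⁻¹) * X) = 0) := by
  have hminv : ∀ r ∈ Ioi (0:ℝ), m r * (m r)⁻¹ = 1 := fun r hr =>
    Matrix.mul_nonsing_inv _ ((Matrix.isUnit_iff_isUnit_det _).mp (hinv r hr))
  -- the explicit right inverse of M
  have hMright : ∀ (φ : ℝ), ∀ r ∈ Ioi (0:ℝ),
      ansatzM X m r φ *
        (NormedSpace.exp (-(φ • Xᵀ)) * (m r)⁻¹ * NormedSpace.exp (-(φ • X))) = 1 := by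
    intro φ r hr
    unfold ansatzM
    simp only [Matrix.mul_assoc]
    rw [exp_cancel, ← Matrix.mul_assoc (m r), hminv r hr, Matrix.one_mul, exp_mul_exp_neg]
  have hMinv : ∀ (φ : ℝ), ∀ r ∈ Ioi (0:ℝ),
      (ansatzM X m r φ)⁻¹ =
        NormedSpace.exp (-(φ • Xᵀ)) * (m r)⁻¹ * NormedSpace.exp (-(φ • X)) :=
    fun φ r hr => Matrix.inv_eq_right_inv (hMright φ r hr)
  -- identify DrM
  have hDrM_eq : ∀ (φ : ℝ), ∀ r ∈ Ioi (0:ℝ),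
      DrM r φ = NormedSpace.exp (φ • X) * m' r * NormedSpace.exp (φ • Xᵀ) := by
    intro φ r hr
    ext i j
    exact (hDrM i j φ r hr).unique
      (const_mul_mul_const_deriv (C := NormedSpace.exp (φ • X))
        (D := NormedSpace.exp (φ • Xᵀ)) (fun i j => hm' i j r hr) i j)
  -- identify A'
  have hA'_eq : ∀ (φ : ℝ), ∀ r ∈ Ioi (0:ℝ),
      A' r φ = NormedSpace.exp (φ • X) * G' r * NormedSpace.exp (-(φ • X)) := by
    intro φ r hr
    ext i j
    have hev : ∀ s ∈ Ioi (0:ℝ),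
        ((s • DrM s φ) * (ansatzM X m s φ)⁻¹) i j
          = (NormedSpace.exp (φ • X) * ((s • m' s) * (m s)⁻¹)
              * NormedSpace.exp (-(φ • X))) i j := by
      intro s hs
      rw [hDrM_eq φ s hs, hMinv φ s hs]
      congr 1
      simp only [Matrix.smul_mul, Matrix.mul_smul, Matrix.mul_assoc]
      rw [exp_cancel]
    have hgoal : HasDerivAt (fun s => ((s • DrM s φ) * (ansatzM X m s φ)⁻¹) i j)
        ((NormedSpace.exp (φ • X) * G' r * NormedSpace.exp (-(φ • X))) i j) r := by
      have h := const_mul_mul_const_deriv (C := NormedSpace.exp (φ • X))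
        (D := NormedSpace.exp (-(φ • X)))
        (g := fun s => (s • m' s) * (m s)⁻¹) (fun i j => hG' i j r hr) i j
      apply h.congr_of_eventuallyEq
      filter_upwards [isOpen_Ioi.mem_nhds hr] with s hs
      exact hev s hs
    exact (hA' i j φ r hr).unique hgoal
  -- identify DφM
  have hDφM_eq : ∀ (φ : ℝ), ∀ r ∈ Ioi (0:ℝ),
      DφM r φ = X * ansatzM X m r φ + ansatzM X m r φ * Xᵀ := by
    intro φ r hr
    ext i j
    have hmc : ∀ i j, HasDerivAt (fun _ : ℝ => m r i j)
        ((0 : Matrix (Fin n) (Fin n) ℝ) i j) φ := fun i j => hasDerivAt_const _ _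
    have h1 : ∀ i j, HasDerivAt (fun ψ : ℝ => (NormedSpace.exp (ψ • X) * m r) i j)
        ((X * NormedSpace.exp (φ • X) * m r) i j) φ := by
      intro i j
      simpa using matrix_mul_deriv (exp_entry_deriv X φ) hmc i j
    have h2 := matrix_mul_deriv h1 (exp_entry_deriv' Xᵀ φ) i j
    have h3 := (hDφM i j φ r hr).unique h2
    rw [h3]
    simp [ansatzM, Matrix.add_apply, Matrix.mul_assoc]
  -- identify B'
  have hB'_eq : ∀ (φ : ℝ), ∀ r ∈ Ioi (0:ℝ),
      B' r φ = NormedSpace.exp (φ • X)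
        * (X * (m r * Xᵀ * (m r)⁻¹) - (m r * Xᵀ * (m r)⁻¹) * X)
        * NormedSpace.exp (-(φ • X)) := by
    intro φ r hr
    set C := m r * Xᵀ * (m r)⁻¹ with hC
    have hfun : ∀ ψ : ℝ, DφM r ψ * (ansatzM X m r ψ)⁻¹
        = X + NormedSpace.exp (ψ • X) * C * NormedSpace.exp (-(ψ • X)) := by
      intro ψ
      rw [hDφM_eq ψ r hr, hMinv ψ r hr, Matrix.add_mul]
      congr 1
      · rw [Matrix.mul_assoc X, hMright ψ r hr, Matrix.mul_one]
      · show ansatzM X m r ψ * Xᵀ * _ = _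
        unfold ansatzM
        rw [hC]
        simp only [Matrix.mul_assoc]
        rw [← Matrix.mul_assoc (NormedSpace.exp (ψ • Xᵀ)) Xᵀ, exp_comm, Matrix.mul_assoc,
          exp_cancel]
    ext i j
    -- derivative of ψ ↦ X + e^{ψX} C e^{-ψX}
    have hCc : ∀ i j, HasDerivAt (fun _ : ℝ => C i j)
        ((0 : Matrix (Fin n) (Fin n) ℝ) i j) φ := fun i j => hasDerivAt_const _ _
    have hEC : ∀ i j, HasDerivAt (fun ψ : ℝ => (NormedSpace.exp (ψ • X) * C) i j)
        ((X * NormedSpace.exp (φ • X) * C) i j) φ := by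
      intro i j
      simpa using matrix_mul_deriv (exp_entry_deriv X φ) hCc i j
    have hN : ∀ i j, HasDerivAt (fun ψ : ℝ => NormedSpace.exp (-(ψ • X)) i j)
        ((NormedSpace.exp (-(φ • X)) * (-X)) i j) φ := by
      intro i j
      simpa [smul_neg] using exp_entry_deriv' (-X) φ i j
    have h2 := matrix_mul_deriv hEC hN i j
    have h4 : HasDerivAt
        (fun ψ : ℝ => (X + NormedSpace.exp (ψ • X) * C * NormedSpace.exp (-(ψ • X))) i j)
        (((X * NormedSpace.exp (φ • X) * C) * NormedSpace.exp (-(φ • X))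
          + (NormedSpace.exp (φ • X) * C) * (NormedSpace.exp (-(φ • X)) * (-X))) i j) φ := by
      have := (hasDerivAt_const φ (X i j)).fun_add h2
      simpa [Matrix.add_apply] using this
    have hb := hB' i j φ r hr
    have hfe : (fun ψ : ℝ => (DφM r ψ * (ansatzM X m r ψ)⁻¹) i j)
        = (fun ψ : ℝ =>
            (X + NormedSpace.exp (ψ • X) * C * NormedSpace.exp (-(ψ • X))) i j) :=
      funext fun ψ => by rw [hfun ψ]
    rw [hfe] at hb
    have h5 := hb.unique h4
    have key : X * NormedSpace.exp (φ • X) * C * NormedSpace.exp (-(φ • X))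
        + NormedSpace.exp (φ • X) * C * (NormedSpace.exp (-(φ • X)) * (-X))
        = NormedSpace.exp (φ • X) * (X * C - C * X) * NormedSpace.exp (-(φ • X)) := by
      rw [Matrix.mul_sub, Matrix.sub_mul, ← exp_comm, Matrix.mul_neg, Matrix.mul_neg,
        exp_neg_comm, sub_eq_add_neg]
      simp only [Matrix.mul_assoc]
    rw [h5, key]
  -- conclude
  constructor
  · intro h r hr
    have h0 := h r hr 0
    rw [hA'_eq 0 r hr, hB'_eq 0 r hr] at h0
    simpa using h0
  · intro h r hr φ
    rw [hA'_eq φ r hr, hB'_eq φ r hr]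
    have key : r • (NormedSpace.exp (φ • X) * G' r * NormedSpace.exp (-(φ • X)))
        = NormedSpace.exp (φ • X) * (r • G' r) * NormedSpace.exp (-(φ • X)) := by
      simp [Matrix.smul_mul, Matrix.mul_smul]
    rw [key, ← Matrix.add_mul, ← Matrix.mul_add, h r hr]
    simp
end

section
/- The pair φ(u) = log(2c cos(2(u−u₀))), a(u) = ±2c sin(2(u−u₀)) (on intervals where cos(2(u−u₀)) > 0, c > 0) satisfies the A-brane constraint equations K + W = 0 and c_X = 0, where K = ½(ȧ² e^{−2φ} + φ̇²), W = −2 − 2a² e^{−2φ}, and c_X = 2 ȧ a e^{−2φ} + 2 φ̇. -/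
/-- The pair φ(u) = log(2c cos(2(u-u₀))), a(u) = ±2c sin(2(u-u₀)) (with c > 0, on the
region where cos(2(u-u₀)) > 0) satisfies the A-brane constraints K + W = 0 and c_X = 0,
where K = ½(ȧ² e^{-2φ} + φ̇²), W = -2 - 2a² e^{-2φ}, c_X = 2ȧa e^{-2φ} + 2φ̇. -/
theorem Abrane_solution_satisfies_constraints
    (c u₀ ε : ℝ) (hc : 0 < c) (hε : ε = 1 ∨ ε = -1) :
    ∀ u : ℝ, 0 < Real.cos (2 * (u - u₀)) →
      let φ : ℝ → ℝ := fun v => Real.log (2 * c * Real.cos (2 * (v - u₀)))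
      let a : ℝ → ℝ := fun v => ε * (2 * c * Real.sin (2 * (v - u₀)))
      ((1/2) * (deriv a u)^2 * Real.exp (-2 * φ u) + (1/2) * (deriv φ u)^2
        = 2 + 2 * (a u)^2 * Real.exp (-2 * φ u)) ∧
      (2 * (deriv a u) * (a u) * Real.exp (-2 * φ u) + 2 * deriv φ u = 0) := by
  intro u hcos φ a
  set s := Real.sin (2 * (u - u₀)) with hs
  set co := Real.cos (2 * (u - u₀)) with hco
  have hx : (0:ℝ) < 2 * c * co := by positivity
  have hxne : 2 * c * co ≠ 0 := ne_of_gt hx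
  have h1 : HasDerivAt (fun v : ℝ => 2 * (v - u₀)) 2 u := by
    simpa using ((hasDerivAt_id u).sub_const u₀).const_mul 2
  have hfa : HasDerivAt a (ε * (2 * c * (co * 2))) u := by
    exact ((h1.sin).const_mul (2 * c)).const_mul ε
  have hfc : HasDerivAt (fun v : ℝ => 2 * c * Real.cos (2 * (v - u₀)))
      (2 * c * (-s * 2)) u := (h1.cos).const_mul (2 * c)
  have hfφ : HasDerivAt φ ((2 * c * (-s * 2)) / (2 * c * co)) u := hfc.log hxne
  have hda : deriv a u = ε * (2 * c * (co * 2)) := hfa.deriv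
  have hdφ : deriv φ u = (2 * c * (-s * 2)) / (2 * c * co) := hfφ.deriv
  have hE : Real.exp (-2 * φ u) = ((2 * c * co) * (2 * c * co))⁻¹ := by
    have : φ u = Real.log (2 * c * co) := rfl
    rw [this, neg_mul, Real.exp_neg, two_mul, Real.exp_add, Real.exp_log hx]
  have ha : a u = ε * (2 * c * s) := rfl
  rcases hε with h | h <;> subst h <;>
    constructor <;> rw [hda, hdφ, hE, ha] <;> field_simp <;> ring
end
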